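/- For every ρ, μ ∈ ℝ and σ > 0, if Y is distributed according to the Gaussian measure N(μ, σ²), then the expected improvement satisfies E[max(0, ρ − Y)] = (ρ − μ)·Φ(z) + σ·φ(z), where z = (ρ − μ)/σ. -/

import Mathlib

open MeasureTheory ProbabilityTheory

/-- The standard normal probability density function. -/
noncomputable def stdNormalPDF (z : ℝ) : ℝ := Real.exp (-z ^ 2 / 2) / Real.sqrt (2 * Real.pi)

/-- The standard normal cumulative distribution function. -/
noncomputable def stdNormalCDF (z : ℝ) : ℝ := ∫ t in Set.Iic z, stdNormalPDF t

/-!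
Writing `Y = μ + σ Z` with `Z` standard normal and using `max 0 (σ t) = σ max 0 t`, it suffices to
treat `Z`. There `E[max 0 (c - Z)] = c Φ(c) - ∫_{-∞}^c z φ(z) dz`, and the last integral is
`-φ(c)` because `φ' (z) = -z φ(z)`.
-/

open Filter Set
open scoped Topology

lemma stdNormalPDF_eq_gaussianPDFReal : stdNormalPDF = gaussianPDFReal 0 1 := by
  ext z
  simp [stdNormalPDF, gaussianPDFReal, div_eq_inv_mul]

lemma hasDerivAt_stdNormalPDF (z : ℝ) : HasDerivAt stdNormalPDF (-z * stdNormalPDF z) z := by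
  have h := (((hasDerivAt_pow 2 z).fun_neg.div_const 2).exp).div_const (Real.sqrt (2 * Real.pi))
  exact h.congr_deriv (by unfold stdNormalPDF; ring)

lemma integrable_stdNormalPDF : Integrable stdNormalPDF := by
  simpa [stdNormalPDF_eq_gaussianPDFReal] using integrable_gaussianPDFReal 0 1

lemma integrable_mul_stdNormalPDF : Integrable fun z ↦ z * stdNormalPDF z := by
  refine ((integrable_mul_exp_neg_mul_sq (b := 1 / 2) one_half_pos).div_const
    (Real.sqrt (2 * Real.pi))).congr (ae_of_all _ fun z ↦ ?_)
  unfold stdNormalPDF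
  ring_nf

lemma integral_Iic_mul_stdNormalPDF (c : ℝ) :
    ∫ z in Iic c, z * stdNormalPDF z = -stdNormalPDF c := by
  have hderiv (z : ℝ) : HasDerivAt (fun t ↦ -stdNormalPDF t) (z * stdNormalPDF z) z :=
    (hasDerivAt_stdNormalPDF z).fun_neg.congr_deriv (by ring)
  have hlim : Tendsto stdNormalPDF atBot (𝓝 0) :=
    tendsto_zero_of_hasDerivAt_of_integrableOn_Iic (a := c) (fun z _ ↦ hasDerivAt_stdNormalPDF z)
      (by simpa only [neg_mul] using integrable_mul_stdNormalPDF.fun_neg.integrableOn)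
      integrable_stdNormalPDF.integrableOn
  simpa using integral_Iic_of_hasDerivAt_of_tendsto' (fun z _ ↦ hderiv z)
    integrable_mul_stdNormalPDF.integrableOn hlim.neg

lemma integral_gaussianReal_zero_one (f : ℝ → ℝ) :
    ∫ z, f z ∂gaussianReal 0 1 = ∫ z, stdNormalPDF z * f z := by
  simp [integral_gaussianReal_eq_integral_smul one_ne_zero, stdNormalPDF_eq_gaussianPDFReal]

lemma integral_max_sub_gaussianReal_zero_one (c : ℝ) :
    ∫ z, max 0 (c - z) ∂gaussianReal 0 1 = c * stdNormalCDF c + stdNormalPDF c := by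
  have hind : (fun z ↦ stdNormalPDF z * max 0 (c - z)) =
      (Iic c).indicator fun z ↦ c * stdNormalPDF z - z * stdNormalPDF z := by
    ext z
    by_cases hz : z ≤ c
    · simp [hz, mul_comm, mul_sub]
    · simp [hz, (not_le.mp hz).le]
  rw [integral_gaussianReal_zero_one, hind, integral_indicator measurableSet_Iic,
    integral_sub (integrable_stdNormalPDF.const_mul c).integrableOn
      integrable_mul_stdNormalPDF.integrableOn,
    integral_const_mul, integral_Iic_mul_stdNormalPDF, stdNormalCDF, sub_neg_eq_add]

lemma gaussianReal_eq_map_const_add_mul (μ σ : ℝ) :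
    gaussianReal μ (σ ^ 2).toNNReal = (gaussianReal 0 1).map fun z ↦ μ + σ * z := by
  rw [show (fun z ↦ μ + σ * z) = (μ + ·) ∘ (σ * ·) from rfl,
    ← Measure.map_map (by fun_prop) (by fun_prop), gaussianReal_map_const_mul,
    gaussianReal_map_const_add]
  congr 1
  · simp
  · ext
    simp [sq_nonneg]

/-- For every ρ, μ ∈ ℝ and σ > 0, if `Y ~ N(μ, σ²)` then the expected improvement satisfies
`E[max 0 (ρ - Y)] = (ρ - μ)·Φ(z) + σ·φ(z)` where `z = (ρ - μ)/σ`. -/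
theorem expected_improvement_gaussian (ρ μ σ : ℝ) (hσ : 0 < σ) :
    ∫ y, max 0 (ρ - y) ∂(gaussianReal μ (Real.toNNReal (σ ^ 2))) =
      (ρ - μ) * stdNormalCDF ((ρ - μ) / σ) + σ * stdNormalPDF ((ρ - μ) / σ) := by
  set c := (ρ - μ) / σ
  have hscale (z : ℝ) : max 0 (ρ - (μ + σ * z)) = σ * max 0 (c - z) := by
    rw [mul_max_of_nonneg _ _ hσ.le, mul_zero, mul_sub, mul_div_cancel₀ _ hσ.ne']
    congr 1
    ring
  rw [gaussianReal_eq_map_const_add_mul, integral_map (by fun_prop) (by fun_prop)]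
  simp_rw [hscale]
  rw [integral_const_mul, integral_max_sub_gaussianReal_zero_one, mul_add, ← mul_assoc,
    mul_div_cancel₀ _ hσ.ne']
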